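/- Let A ∈ Mₙ(ℤ) and let {F_m} be a Følner sequence in ℕ. If μ is a Borel probability measure on 𝕋ⁿ such that lim_{m→∞} (1/|F_m|) Σ_{j ∈ F_m} μ̂(A^j k + l) = μ̂(k) μ̂(l) for all k, l ∈ ℤ^{n×1}, then μ̂(Ak) = μ̂(k) for every k ∈ ℤ^{n×1}, and hence μ is T_A-invariant. -/

import Mathlib

/-!
Taking `l = 0` in the hypothesis, the Følner averages of the bounded sequence `j ↦ μ̂(Aʲk)`
converge to `μ̂(k)`, while those of the shifted sequence `j ↦ μ̂(Aʲ⁺¹k)` converge to `μ̂(Ak)`.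
Følner averages of a bounded sequence are asymptotically invariant under shifts, so
`μ̂(Ak) = μ̂(k)`. The Fourier coefficients of `(T_A)_* μ` are `k ↦ μ̂(Ak)`, and a finite measure
on the torus is determined by its Fourier coefficients because trigonometric polynomials are dense
in `C(𝕋ⁿ, ℂ)`; hence `(T_A)_* μ = μ`.
-/

open MeasureTheory Filter Matrix Topology
open scoped symmDiff

instance : Fact ((0:ℝ) < 1) := ⟨one_pos⟩

/-- The `n`-torus `𝕋ⁿ = ℝⁿ/ℤⁿ`, as the product of `n` copies of `ℝ/ℤ`. -/
abbrev Torus (n : ℕ) := Fin n → AddCircle (1 : ℝ)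

/-- The `×A` map `T_A` on the `n`-torus, `T_A(x + ℤⁿ) = xA + ℤⁿ` for row vectors `x`. -/
noncomputable def TA {n : ℕ} (A : Matrix (Fin n) (Fin n) ℤ) (x : Torus n) : Torus n :=
  fun j => ∑ i, A i j • x i

/-- The Fourier coefficient `μ̂(k) = ∫_{𝕋ⁿ} z^k dμ(z)` of a measure `μ` on the `n`-torus,
where `z^k = z₁^{k₁} ⋯ zₙ^{kₙ}`. -/
noncomputable def fc {n : ℕ} (μ : Measure (Torus n)) (k : Fin n → ℤ) : ℂ :=
  ∫ x, ∏ i, fourier (k i) (x i) ∂μ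

/-- A Følner sequence in `ℕ`: a sequence of nonempty finite subsets `F m ⊆ ℕ` with
`|(F m + m') ∆ F m| / |F m| → 0` for every `m' ∈ ℕ`. -/
def IsFolner (F : ℕ → Finset ℕ) : Prop :=
  (∀ m, (F m).Nonempty) ∧
  ∀ m' : ℕ, Tendsto
    (fun m => ((((F m).image (· + m')) ∆ (F m)).card : ℝ) / (F m).card) atTop (𝓝 0)


section IntegralOnContinuousMaps

variable {X : Type*} [TopologicalSpace X] [MeasurableSpace X] [BorelSpace X] {𝕜 : Type*} [RCLike 𝕜]

theorem MeasureTheory.ext_of_forall_integral_continuousMap_eq [HasOuterApproxClosed X]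
    {μ ν : Measure X} [IsFiniteMeasure μ] [IsFiniteMeasure ν]
    (h : ∀ f : C(X, 𝕜), ∫ x, f x ∂μ = ∫ x, f x ∂ν) : μ = ν := by
  refine ext_of_forall_integral_eq_of_IsFiniteMeasure fun f => ?_
  have hf := h ⟨fun x => (f x : 𝕜), by fun_prop⟩
  simp only [ContinuousMap.coe_mk, integral_ofReal] at hf
  exact_mod_cast hf

variable [CompactSpace X]

noncomputable def ContinuousMap.integralCLM (μ : Measure X) [IsFiniteMeasure μ] :
    C(X, 𝕜) →L[𝕜] 𝕜 :=
  L1.integralCLM' 𝕜 ∘L ContinuousMap.toLp 1 μ 𝕜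

theorem ContinuousMap.integralCLM_apply (μ : Measure X) [IsFiniteMeasure μ] (f : C(X, 𝕜)) :
    ContinuousMap.integralCLM μ f = ∫ x, f x ∂μ := by
  rw [integralCLM, ContinuousLinearMap.comp_apply, ← L1.integral_eq', L1.integral_eq_integral]
  exact integral_congr_ae (ContinuousMap.coeFn_toLp μ f)

theorem MeasureTheory.ext_of_forall_integral_eq_of_dense_span [HasOuterApproxClosed X]
    {μ ν : Measure X} [IsFiniteMeasure μ] [IsFiniteMeasure ν] {S : Set C(X, 𝕜)}
    (hS : (Submodule.span 𝕜 S).topologicalClosure = ⊤)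
    (h : ∀ f ∈ S, ∫ x, f x ∂μ = ∫ x, f x ∂ν) : μ = ν := by
  have hCLM : ContinuousMap.integralCLM μ = ContinuousMap.integralCLM (𝕜 := 𝕜) ν :=
    ContinuousLinearMap.ext_on (Submodule.dense_iff_topologicalClosure_eq_top.mpr hS)
      fun f hf => by simp only [ContinuousMap.integralCLM_apply, h f hf]
  refine ext_of_forall_integral_continuousMap_eq (𝕜 := 𝕜) fun f => ?_
  simp only [← ContinuousMap.integralCLM_apply, hCLM]

end IntegralOnContinuousMaps

theorem AddCircle.toCircle_sum {T : ℝ} {ι : Type*} (s : Finset ι) (f : ι → AddCircle T) :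
    toCircle (∑ i ∈ s, f i) = ∏ i ∈ s, toCircle (f i) := by
  classical
  induction s using Finset.induction_on with
  | empty => simp
  | insert a s ha ih => rw [Finset.sum_insert ha, Finset.prod_insert ha, toCircle_add, ih]

namespace UnitAddTorus

variable {d : Type*} [Fintype d]

theorem mFourier_apply_eq_toCircle (k : d → ℤ) (x : UnitAddTorus d) :
    mFourier k x = AddCircle.toCircle (∑ i, k i • x i) := by
  simp only [mFourier, ContinuousMap.coe_mk, fourier_apply, AddCircle.toCircle_sum]
  exact (map_prod Circle.coeHom _ _).symm

end UnitAddTorus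

open UnitAddTorus

section Torus

variable {n : ℕ}

theorem fc_eq_integral_mFourier (μ : Measure (Torus n)) (k : Fin n → ℤ) :
    fc μ k = ∫ x, mFourier k x ∂μ := rfl

theorem norm_fc_le_one (μ : Measure (Torus n)) [IsProbabilityMeasure μ] (k : Fin n → ℤ) :
    ‖fc μ k‖ ≤ 1 := by
  rw [fc_eq_integral_mFourier]
  simpa using norm_integral_le_of_norm_le_const (μ := μ) (f := fun x => mFourier k x) (C := 1)
    (Eventually.of_forall fun x => ((mFourier k).norm_coe_le_norm x).trans_eq mFourier_norm)

theorem fc_zero (μ : Measure (Torus n)) [IsProbabilityMeasure μ] : fc μ 0 = 1 := by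
  simp [fc_eq_integral_mFourier, mFourier_zero]

theorem continuous_TA (A : Matrix (Fin n) (Fin n) ℤ) : Continuous (TA A) := by
  unfold TA; fun_prop

theorem mFourier_TA (A : Matrix (Fin n) (Fin n) ℤ) (k : Fin n → ℤ) (x : Torus n) :
    mFourier k (TA A x) = mFourier (A *ᵥ k) x := by
  simp only [mFourier_apply_eq_toCircle, TA, mulVec, dotProduct, Finset.smul_sum, smul_smul,
    Finset.sum_smul]
  rw [Finset.sum_comm]
  simp only [mul_comm]

theorem fc_map_TA (A : Matrix (Fin n) (Fin n) ℤ) (μ : Measure (Torus n)) (k : Fin n → ℤ) :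
    fc (μ.map (TA A)) k = fc μ (A *ᵥ k) := by
  rw [fc_eq_integral_mFourier, integral_map (continuous_TA A).aemeasurable
    (mFourier k).continuous.aestronglyMeasurable]
  simp only [mFourier_TA, fc_eq_integral_mFourier]

theorem ext_of_fc_eq {μ ν : Measure (Torus n)} [IsFiniteMeasure μ] [IsFiniteMeasure ν]
    (h : ∀ k, fc μ k = fc ν k) : μ = ν :=
  ext_of_forall_integral_eq_of_dense_span span_mFourier_closure_eq_top <| by
    rintro _ ⟨k, rfl⟩
    exact h k

end Torus

theorem Finset.norm_sum_sub_sum_le_sum_symmDiff {ι E : Type*} [DecidableEq ι]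
    [SeminormedAddCommGroup E] (s t : Finset ι) (g : ι → E) :
    ‖∑ i ∈ s, g i - ∑ i ∈ t, g i‖ ≤ ∑ i ∈ s ∆ t, ‖g i‖ := by
  rw [← Finset.sum_sdiff_sub_sum_sdiff, symmDiff_def, Finset.sup_eq_union,
    Finset.sum_union disjoint_sdiff_sdiff]
  exact (norm_sub_le _ _).trans (add_le_add (norm_sum_le _ _) (norm_sum_le _ _))

section Folner

variable {𝕜 : Type*} [RCLike 𝕜] {F : ℕ → Finset ℕ}

theorem IsFolner.tendsto_average_shift_sub_average (hF : IsFolner F) {g : ℕ → 𝕜} {C : ℝ}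
    (hg : ∀ j, ‖g j‖ ≤ C) (m' : ℕ) :
    Tendsto (fun m => (1 / ((F m).card : 𝕜)) * ∑ j ∈ F m, g (j + m') -
      (1 / ((F m).card : 𝕜)) * ∑ j ∈ F m, g j) atTop (𝓝 0) := by
  have hbound : Tendsto (fun m => C * (((((F m).image (· + m')) ∆ (F m)).card : ℝ) / (F m).card))
      atTop (𝓝 0) := by
    simpa using (hF.2 m').const_mul C
  refine squeeze_zero_norm (fun m => ?_) hbound
  have hshift : ∑ j ∈ F m, g (j + m') = ∑ j ∈ (F m).image (· + m'), g j :=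
    (Finset.sum_image fun _ _ _ _ => Nat.add_right_cancel).symm
  have hsum : ‖∑ j ∈ (F m).image (· + m'), g j - ∑ j ∈ F m, g j‖ ≤
      C * (((F m).image (· + m')) ∆ (F m)).card := by
    refine (Finset.norm_sum_sub_sum_le_sum_symmDiff _ _ g).trans ?_
    simpa [mul_comm] using Finset.sum_le_card_nsmul _ _ _ fun j _ => hg j
  calc _ = ‖∑ j ∈ (F m).image (· + m'), g j - ∑ j ∈ F m, g j‖ / (F m).card := by
        rw [← mul_sub, hshift, norm_mul, norm_div, norm_one, RCLike.norm_natCast,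
          one_div_mul_eq_div]
    _ ≤ C * (((F m).image (· + m')) ∆ (F m)).card / (F m).card := by gcongr
    _ = _ := mul_div_assoc ..

theorem IsFolner.eq_of_tendsto_average_shift (hF : IsFolner F) {g : ℕ → 𝕜} {C : ℝ}
    (hg : ∀ j, ‖g j‖ ≤ C) (m' : ℕ) {a b : 𝕜}
    (ha : Tendsto (fun m => (1 / ((F m).card : 𝕜)) * ∑ j ∈ F m, g j) atTop (𝓝 a))
    (hb : Tendsto (fun m => (1 / ((F m).card : 𝕜)) * ∑ j ∈ F m, g (j + m')) atTop (𝓝 b)) :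
    b = a :=
  sub_eq_zero.mp <| tendsto_nhds_unique (hb.sub ha) (hF.tendsto_average_shift_sub_average hg m')

end Folner

theorem invariance_from_fourier_limit
    {n : ℕ} (A : Matrix (Fin n) (Fin n) ℤ)
    (F : ℕ → Finset ℕ) (hF : IsFolner F)
    (μ : Measure (Torus n)) [IsProbabilityMeasure μ]
    (h : ∀ k l : Fin n → ℤ,
      Tendsto
        (fun m => (1 / ((F m).card : ℂ)) * ∑ j ∈ F m, fc μ ((A ^ j).mulVec k + l))
        atTop (𝓝 (fc μ k * fc μ l))) :
    (∀ k : Fin n → ℤ, fc μ (A.mulVec k) = fc μ k) ∧ Measure.map (TA A) μ = μ := by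
  have hfc (k : Fin n → ℤ) : fc μ (A *ᵥ k) = fc μ k := by
    have hpow (j : ℕ) : (A ^ j) *ᵥ (A *ᵥ k) + 0 = (A ^ (j + 1)) *ᵥ k + 0 := by
      rw [mulVec_mulVec, pow_succ]
    refine hF.eq_of_tendsto_average_shift (fun j => norm_fc_le_one μ _) 1
      (by simpa only [fc_zero, mul_one] using h k 0) ?_
    simpa only [hpow, fc_zero, mul_one] using h (A *ᵥ k) 0
  have : IsProbabilityMeasure (μ.map (TA A)) :=
    Measure.isProbabilityMeasure_map (continuous_TA A).aemeasurable
  exact ⟨hfc, ext_of_fc_eq fun k => by rw [fc_map_TA, hfc]⟩
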